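/- arXiv:1408.5447 — 3 statements merged into one kernel-verified Lean document; each statement's English description precedes it below -/
import Mathlib

section
/- Let N ≥ 3 be an integer, −1 < γ < 1, and 0 < α ≤ N − 2. Then every Barenblatt profile f with exponent α satisfies f(η) = M(α/2, N/2; −(1−γ)η²/4) for all η ≥ 0; moreover α·f(η) + η·f'(η) > 0 for every η > 0, and f(η) > 0 for every η ≥ 0. -/
/-! Where `g = α f + η f'` is positive the absolute value in the equation resolves, and `f`
solves the linear equation `f'' + ((N - 1) / η) f' = -((1 - γ) / 2) g`. Under
`z = -(1 - γ) η² / 4` this is Kummer's equation, so `F(η) = M(α/2, N/2; z)` solves it too, and a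
weighted Wronskian shows `f = F` as long as `g` stays positive. Kummer's contiguous relation gives
`α F + η F' = α M(α/2 + 1, N/2; z)`, and `M(c, b; z) > 0` for `z ≤ 0` whenever `c ≤ b`; as
`α/2 + 1 ≤ N/2`, `g` is still positive at the end of every interval on which it is positive,
hence everywhere, and then `f = F > 0`. -/

/-- A Barenblatt profile with exponent `α` (dimension `N`, parameter `γ`). -/
def IsBarenblattProfile (N : ℕ) (γ α : ℝ) (f f' f'' : ℝ → ℝ) : Prop :=
  (∀ η ∈ Set.Ici (0:ℝ), HasDerivWithinAt f (f' η) (Set.Ici 0) η) ∧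
  ContinuousOn f' (Set.Ici 0) ∧
  (∀ η ∈ Set.Ioi (0:ℝ), HasDerivWithinAt f' (f'' η) (Set.Ioi 0) η) ∧
  f 0 = 1 ∧ f' 0 = 0 ∧
  (∀ η : ℝ, 0 < η →
    f'' η + (((N : ℝ) - 1) / η) * f' η =
      -(1/2) * (α * f η + η * f' η) + (γ/2) * |α * f η + η * f' η|)

/-- The Kummer confluent hypergeometric function
`M(a, b; z) = ∑_{k} ((a)_k / (b)_k) z^k / k!`. -/
noncomputable def kummerM (a b z : ℝ) : ℝ :=
  ∑' k : ℕ, ((ascPochhammer ℝ k).eval a / (ascPochhammer ℝ k).eval b) *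
    z ^ k / (Nat.factorial k)

open Polynomial Filter Set

lemma ascPochhammer_succ_eval_left (x : ℝ) (n : ℕ) :
    (ascPochhammer ℝ (n + 1)).eval x = x * (ascPochhammer ℝ n).eval (x + 1) := by
  rw [ascPochhammer_succ_left, eval_mul, eval_X, eval_comp, eval_add, eval_X, eval_one]

lemma hasSum_of_hasSum_succ {G : Type*} [AddCommGroup G] [TopologicalSpace G]
    [IsTopologicalAddGroup G] {f : ℕ → G} {s : G} (h0 : f 0 = 0)
    (h : HasSum (fun k => f (k + 1)) s) : HasSum f s := by
  simpa [h0] using (hasSum_nat_add_iff 1).1 h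

noncomputable def kummerCoeff (a b : ℝ) (k : ℕ) : ℝ :=
  (ascPochhammer ℝ k).eval a / ((ascPochhammer ℝ k).eval b * k.factorial)

section KummerSeries

variable {a b : ℝ}

lemma kummerM_eq_tsum (a b z : ℝ) : kummerM a b z = ∑' k, kummerCoeff a b k * z ^ k :=
  tsum_congr fun k => by rw [kummerCoeff]; ring

@[simp]
lemma kummerCoeff_zero (a b : ℝ) : kummerCoeff a b 0 = 1 := by
  simp [kummerCoeff]

lemma kummerCoeff_succ_mul (hb : 0 < b) (k : ℕ) :
    kummerCoeff a b (k + 1) * ((b + k) * (k + 1)) = kummerCoeff a b k * (a + k) := by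
  have := ascPochhammer_pos k b hb
  rw [kummerCoeff, kummerCoeff, ascPochhammer_succ_eval, ascPochhammer_succ_eval]
  push_cast [Nat.factorial_succ]
  field_simp

lemma succ_mul_kummerCoeff_succ (hb : 0 < b) (k : ℕ) :
    (k + 1) * kummerCoeff a b (k + 1) = a / b * kummerCoeff (a + 1) (b + 1) k := by
  have := ascPochhammer_pos k (b + 1) (by linarith)
  rw [kummerCoeff, kummerCoeff, ascPochhammer_succ_eval_left, ascPochhammer_succ_eval_left]
  push_cast [Nat.factorial_succ]
  field_simp

lemma kummerCoeff_add_one_left (hb : 0 < b) (k : ℕ) :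
    kummerCoeff (a + 1) b (k + 1) =
      kummerCoeff a b (k + 1) + kummerCoeff (a + 1) (b + 1) k / b := by
  have := ascPochhammer_pos k (b + 1) (by linarith)
  rw [kummerCoeff, kummerCoeff, kummerCoeff, ascPochhammer_succ_eval k (a + 1),
    ascPochhammer_succ_eval_left a, ascPochhammer_succ_eval_left b]
  push_cast [Nat.factorial_succ]
  field_simp
  ring

lemma summable_norm_kummerCoeff_mul_pow (hb : 0 < b) (z : ℝ) :
    Summable fun k => ‖kummerCoeff a b k * z ^ k‖ := by
  refine summable_of_ratio_norm_eventually_le (r := 1 / 2) (by norm_num) ?_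
  obtain ⟨K, hK⟩ := exists_nat_ge (2 * (|a| + 1) * |z|)
  filter_upwards [eventually_ge_atTop (max K 1)] with k hk
  have hk1 : (1 : ℝ) ≤ k := by exact_mod_cast (le_max_right _ _).trans hk
  have hKk : (K : ℝ) ≤ k := by exact_mod_cast (le_max_left _ _).trans hk
  have hbk : 0 < (b + k) * (k + 1) := by positivity
  have hcoeff : kummerCoeff a b (k + 1) = kummerCoeff a b k * (a + k) / ((b + k) * (k + 1)) := by
    rw [eq_div_iff hbk.ne', kummerCoeff_succ_mul hb]
  have hratio : |a + k| * |z| ≤ 1 / 2 * ((b + k) * (k + 1)) := by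
    have : |a + k| ≤ (|a| + 1) * k := by
      have := abs_add_le a k
      rw [Nat.abs_cast] at this
      nlinarith [abs_nonneg a]
    have := abs_nonneg z
    calc |a + k| * |z| ≤ (|a| + 1) * k * |z| := by gcongr
      _ ≤ 1 / 2 * ((b + k) * (k + 1)) := by nlinarith
  calc ‖‖kummerCoeff a b (k + 1) * z ^ (k + 1)‖‖
      = ‖kummerCoeff a b k * z ^ k‖ * (|a + k| * |z| / ((b + k) * (k + 1))) := by
        rw [norm_norm, hcoeff, pow_succ]
        simp only [Real.norm_eq_abs, abs_mul, abs_div, abs_of_pos hbk]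
        ring
    _ ≤ ‖kummerCoeff a b k * z ^ k‖ * (1 / 2) := by
        refine mul_le_mul_of_nonneg_left ?_ (norm_nonneg _)
        rwa [div_le_iff₀ hbk]
    _ = 1 / 2 * ‖‖kummerCoeff a b k * z ^ k‖‖ := by rw [norm_norm, mul_comm]

lemma hasSum_kummerM (hb : 0 < b) (z : ℝ) :
    HasSum (fun k => kummerCoeff a b k * z ^ k) (kummerM a b z) := by
  rw [kummerM_eq_tsum]
  exact (summable_norm_kummerCoeff_mul_pow hb z).of_norm.hasSum

@[simp]
lemma kummerM_zero (a b : ℝ) : kummerM a b 0 = 1 := by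
  rw [kummerM_eq_tsum, tsum_eq_single 0 fun k hk => by simp [hk]]
  simp

lemma hasSum_succ_mul_kummerCoeff_succ (hb : 0 < b) (z : ℝ) :
    HasSum (fun k : ℕ => (k + 1) * kummerCoeff a b (k + 1) * z ^ k)
      (a / b * kummerM (a + 1) (b + 1) z) :=
  ((hasSum_kummerM (a := a + 1) (by linarith) z).mul_left (a / b)).congr_fun fun k => by
    rw [succ_mul_kummerCoeff_succ hb]; ring

lemma hasDerivAt_kummerM (hb : 0 < b) (x : ℝ) :
    HasDerivAt (kummerM a b) (a / b * kummerM (a + 1) (b + 1) x) x := by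
  set t := |x| + 1
  have hx : x ∈ Ioo (-t) t := abs_lt.1 (by linarith)
  have hbound : Summable fun k => |kummerCoeff a b k| * (k * t ^ (k - 1)) := by
    rw [← summable_nat_add_iff 1]
    refine ((summable_norm_kummerCoeff_mul_pow (a := a + 1) (b := b + 1) (by linarith)
      t).mul_left |a / b|).congr fun k => ?_
    have h := congrArg abs (succ_mul_kummerCoeff_succ (a := a) hb k)
    rw [abs_mul, abs_mul, abs_of_pos (by positivity : (0 : ℝ) < k + 1)] at h
    rw [Real.norm_eq_abs, abs_mul, abs_of_pos (pow_pos (by positivity : 0 < t) k),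
      Nat.add_sub_cancel]
    push_cast
    linear_combination (-t ^ k) * h
  have hterm : ∀ k y, y ∈ Ioo (-t) t → ‖kummerCoeff a b k * (k * y ^ (k - 1))‖
      ≤ |kummerCoeff a b k| * (k * t ^ (k - 1)) := by
    intro k y hy
    rw [Real.norm_eq_abs, abs_mul, abs_mul, abs_pow, Nat.abs_cast]
    gcongr
    exact abs_lt.2 hy |>.le
  have hseries : HasSum (fun k => kummerCoeff a b k * (k * x ^ (k - 1)))
      (a / b * kummerM (a + 1) (b + 1) x) := by
    refine hasSum_of_hasSum_succ (by simp) <|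
      (hasSum_succ_mul_kummerCoeff_succ hb x).congr_fun fun k => ?_
    rw [Nat.add_sub_cancel]
    push_cast
    ring
  rw [funext (kummerM_eq_tsum a b), ← hseries.tsum_eq]
  exact hasDerivAt_tsum_of_isPreconnected hbound isOpen_Ioo (convex_Ioo _ _).isPreconnected
    (fun k y _ => (hasDerivAt_pow k y).const_mul _) hterm hx
    (summable_norm_kummerCoeff_mul_pow hb x).of_norm hx

/-- Kummer's equation `z M'' + (b - z) M' = a M`. -/
lemma kummerM_ode (hb : 0 < b) (z : ℝ) :
    z * (a / b * ((a + 1) / (b + 1) * kummerM (a + 2) (b + 2) z))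
      + (b - z) * (a / b * kummerM (a + 1) (b + 1) z) = a * kummerM a b z := by
  have hS1 := hasSum_succ_mul_kummerCoeff_succ (a := a) hb z
  have hS2 : HasSum (fun k : ℕ => (k + 1) * ((k + 2) * kummerCoeff a b (k + 2)) * z ^ k)
      (a / b * ((a + 1) / (b + 1) * kummerM (a + 2) (b + 2) z)) := by
    have h := (hasSum_succ_mul_kummerCoeff_succ (a := a + 1) (b := b + 1) (by linarith) z).mul_left
      (a / b)
    rw [add_assoc a, add_assoc b, one_add_one_eq_two] at h
    refine h.congr_fun fun k => ?_
    have hc := succ_mul_kummerCoeff_succ (a := a) hb (k + 1)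
    push_cast at hc
    rw [show k + 1 + 1 = k + 2 from rfl] at hc
    linear_combination ((k + 1) * z ^ k) * hc
  have hzS2 : HasSum (fun k : ℕ => k * ((k + 1) * kummerCoeff a b (k + 1)) * z ^ k)
      (z * (a / b * ((a + 1) / (b + 1) * kummerM (a + 2) (b + 2) z))) :=
    hasSum_of_hasSum_succ (by simp) <| (hS2.mul_left z).congr_fun fun k => by push_cast; ring
  have hzS1 : HasSum (fun k : ℕ => k * kummerCoeff a b k * z ^ k)
      (z * (a / b * kummerM (a + 1) (b + 1) z)) :=
    hasSum_of_hasSum_succ (by simp) <| (hS1.mul_left z).congr_fun fun k => by push_cast; ring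
  have hzero : HasSum (fun _ : ℕ => (0 : ℝ)) _ :=
    (((hzS2.add (hS1.mul_left b)).sub hzS1).sub ((hasSum_kummerM hb z).mul_left a)).congr_fun
      fun k => by linear_combination (-z ^ k) * kummerCoeff_succ_mul (a := a) hb k
  linear_combination hzero.unique hasSum_zero

lemma kummerM_add_one_left (hb : 0 < b) (z : ℝ) :
    kummerM (a + 1) b z = kummerM a b z + z / b * kummerM (a + 1) (b + 1) z := by
  have hshift : HasSum (fun k => (kummerCoeff (a + 1) b k - kummerCoeff a b k) * z ^ k)
      (z / b * kummerM (a + 1) (b + 1) z) :=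
    hasSum_of_hasSum_succ (by simp) <|
      ((hasSum_kummerM (a := a + 1) (by linarith) z).mul_left (z / b)).congr_fun fun k => by
        rw [kummerCoeff_add_one_left hb]; ring
  refine (hasSum_kummerM hb z).unique ?_
  exact ((hasSum_kummerM hb z).add hshift).congr_fun fun k => by ring

end KummerSeries

lemma forall_pos_of_forall_Ico_pos {g : ℝ → ℝ} (hg : ContinuousOn g (Ici 0)) (h0 : 0 < g 0)
    (hstep : ∀ θ > 0, (∀ t ∈ Ico 0 θ, 0 < g t) → 0 < g θ) : ∀ t ≥ 0, 0 < g t := by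
  intro x hx
  by_contra! hgx
  set A := Icc 0 x ∩ g ⁻¹' Iic 0
  have hA : IsClosed A :=
    (hg.mono Icc_subset_Ici_self).preimage_isClosed_of_isClosed isClosed_Icc isClosed_Iic
  have hAbdd : BddBelow A := ⟨0, fun t ht => ht.1.1⟩
  have hτ : sInf A ∈ A := hA.csInf_mem ⟨x, ⟨hx, le_rfl⟩, hgx⟩ hAbdd
  have hτpos : 0 < sInf A := by
    refine hτ.1.1.lt_of_ne fun h => ?_
    have := hτ.2
    rw [← h, mem_preimage, mem_Iic] at this
    linarith
  refine not_lt.2 hτ.2 (hstep _ hτpos fun t ht => ?_)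
  by_contra! hgt
  exact ht.2.not_ge (csInf_le hAbdd ⟨⟨ht.1, ht.2.le.trans hτ.1.2⟩, hgt⟩)

lemma monotoneOn_Icc_of_hasDerivAt_nonneg {V V' : ℝ → ℝ} {a b : ℝ}
    (hV : ContinuousOn V (Icc a b)) (hV' : ∀ t ∈ Ioo a b, HasDerivAt V (V' t) t)
    (hnonneg : ∀ t ∈ Ioo a b, 0 ≤ V' t) : MonotoneOn V (Icc a b) :=
  monotoneOn_of_hasDerivWithinAt_nonneg (convex_Icc a b) hV
    (by simpa only [interior_Icc] using fun t ht => (hV' t ht).hasDerivWithinAt)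
    (by simpa only [interior_Icc] using hnonneg)

lemma eq_of_hasDerivAt_eq_zero {V : ℝ → ℝ} {a b : ℝ} (hV : ContinuousOn V (Icc a b))
    (hV' : ∀ t ∈ Ioo a b, HasDerivAt V 0 t) : ∀ t ∈ Icc a b, V t = V a := by
  have hmono := monotoneOn_Icc_of_hasDerivAt_nonneg hV hV' fun _ _ => le_rfl
  have hmono_neg := monotoneOn_Icc_of_hasDerivAt_nonneg hV.neg (fun t ht => (hV' t ht).neg)
    fun _ _ => by norm_num
  intro t ht
  have ha : a ∈ Icc a b := ⟨le_rfl, ht.1.trans ht.2⟩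
  exact le_antisymm (neg_le_neg_iff.1 (hmono_neg ha ht ht.1)) (hmono ha ht ht.1)

/-- `(s ^ b (y + y'))' = (b - c) s ^ (b - 1) y`, so up to the first zero of `y` we have
`y + y' ≥ 0`, i.e. `eˢ y` is nondecreasing, and `y` cannot reach zero. -/
lemma pos_of_reflected_kummer_ode {b c : ℝ} {y y' y'' : ℝ → ℝ} (hb : 0 < b) (hcb : c ≤ b)
    (hy : ∀ s, HasDerivAt y (y' s) s) (hy' : ∀ s, HasDerivAt y' (y'' s) s)
    (hode : ∀ s > 0, s * y'' s + (b + s) * y' s + c * y s = 0) (hy0 : 0 < y 0) :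
    ∀ s ≥ 0, 0 < y s := by
  have hyc : Continuous y := continuous_iff_continuousAt.2 fun s => (hy s).continuousAt
  have hy'c : Continuous y' := continuous_iff_continuousAt.2 fun s => (hy' s).continuousAt
  refine forall_pos_of_forall_Ico_pos hyc.continuousOn hy0 fun θ hθ hpos => ?_
  set q : ℝ → ℝ := fun s => s ^ b * (y s + y' s)
  have hq : ∀ s ∈ Ioo 0 θ, HasDerivAt q ((b - c) * s ^ (b - 1) * y s) s := by
    intro s hs
    have hsb : s ^ b = s * s ^ (b - 1) := by
      rw [Real.rpow_sub_one hs.1.ne', mul_div_cancel₀ _ hs.1.ne']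
    refine ((Real.hasDerivAt_rpow_const (Or.inl hs.1.ne')).mul
      ((hy s).add (hy' s))).congr_deriv ?_
    rw [Pi.add_apply]
    linear_combination s ^ (b - 1) * hode s hs.1 + (y' s + y'' s) * hsb
  have hqc : ContinuousOn q (Icc 0 θ) :=
    ((Real.continuous_rpow_const hb.le).mul (hyc.add hy'c)).continuousOn
  have hqmono : MonotoneOn q (Icc 0 θ) := by
    refine monotoneOn_Icc_of_hasDerivAt_nonneg hqc hq fun s hs => ?_
    have := hpos s ⟨hs.1.le, hs.2⟩
    have := Real.rpow_nonneg hs.1.le (b - 1)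
    have : 0 ≤ b - c := sub_nonneg.2 hcb
    positivity
  have hsum : ∀ s ∈ Ioo 0 θ, 0 ≤ y s + y' s := by
    intro s hs
    have hq0 : q 0 ≤ q s := hqmono ⟨le_rfl, hθ.le⟩ ⟨hs.1.le, hs.2.le⟩ hs.1.le
    simp only [q, Real.zero_rpow hb.ne', zero_mul] at hq0
    exact nonneg_of_mul_nonneg_right hq0 (Real.rpow_pos_of_pos hs.1 b)
  have hvmono : MonotoneOn (fun s => Real.exp s * y s) (Icc 0 θ) := by
    refine monotoneOn_Icc_of_hasDerivAt_nonneg (Real.continuous_exp.mul hyc).continuousOn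
      (fun s _ => (Real.hasDerivAt_exp s).mul (hy s)) fun s hs => ?_
    rw [← mul_add]
    exact mul_nonneg (Real.exp_pos s).le (hsum s hs)
  have hv := hvmono ⟨le_rfl, hθ.le⟩ ⟨hθ.le, le_rfl⟩ hθ.le
  simp only [Real.exp_zero, one_mul] at hv
  exact pos_of_mul_pos_right (hy0.trans_le hv) (Real.exp_pos θ).le

lemma kummerM_pos_of_nonpos {b c : ℝ} (hb : 0 < b) (hcb : c ≤ b) {z : ℝ} (hz : z ≤ 0) :
    0 < kummerM c b z := by
  have hy : ∀ s, HasDerivAt (fun s => kummerM c b (-s))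
      (-(c / b * kummerM (c + 1) (b + 1) (-s))) s := fun s => by
    simpa [Function.comp_def] using (hasDerivAt_kummerM hb (-s)).comp s (hasDerivAt_neg s)
  have hy' : ∀ s, HasDerivAt (fun s => -(c / b * kummerM (c + 1) (b + 1) (-s)))
      (c / b * ((c + 1) / (b + 1) * kummerM (c + 2) (b + 2) (-s))) s := by
    intro s
    have := (((hasDerivAt_kummerM (a := c + 1) (b := b + 1) (by linarith) (-s)).comp s
      (hasDerivAt_neg s)).const_mul (c / b)).neg
    rw [add_assoc c, add_assoc b, one_add_one_eq_two] at this
    exact this.congr_deriv (by ring)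
  have hode : ∀ s > 0, s * (c / b * ((c + 1) / (b + 1) * kummerM (c + 2) (b + 2) (-s)))
      + (b + s) * -(c / b * kummerM (c + 1) (b + 1) (-s)) + c * kummerM c b (-s) = 0 :=
    fun s _ => by linear_combination (-1 : ℝ) * kummerM_ode (a := c) hb (-s)
  simpa using pos_of_reflected_kummer_ode hb hcb hy hy' hode (by simp) (-z) (by linarith)

/-- The Barenblatt equation on a range where `α f + η f' > 0`, with `m = N - 1` and
`c = (1 - γ) / 2`. -/
structure IsRadialSolution (m c α θ : ℝ) (u u' : ℝ → ℝ) : Prop where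
  continuousOn : ContinuousOn u (Icc 0 θ)
  continuousOn_deriv : ContinuousOn u' (Icc 0 θ)
  hasDerivAt : ∀ t ∈ Ioo 0 θ, HasDerivAt u (u' t) t
  hasDerivAt_deriv : ∀ t ∈ Ioo 0 θ, HasDerivAt u' (-(m / t) * u' t - c * (α * u t + t * u' t)) t

namespace IsRadialSolution

variable {m c α θ : ℝ} {u u' v v' : ℝ → ℝ}

/-- The weighted Wronskian `W = t ^ m (u v' - v u')` satisfies `W' = -c t W`, so
`W · exp (c t² / 2)` is constant, and it vanishes at `t = 0`. -/
lemma wronskian_eq_zero (hu : IsRadialSolution m c α θ u u') (hv : IsRadialSolution m c α θ v v')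
    (hm : 0 ≤ m) (h0 : u 0 = v 0) (h0' : u' 0 = v' 0) :
    ∀ t ∈ Ioc 0 θ, u t * v' t - v t * u' t = 0 := by
  set V : ℝ → ℝ := fun t => t ^ m * (u t * v' t - v t * u' t) * Real.exp (c * t ^ 2 / 2)
  have hV : ∀ t ∈ Ioo 0 θ, HasDerivAt V 0 t := by
    intro t ht
    have hpow := Real.hasDerivAt_rpow_const (p := m) (Or.inl ht.1.ne')
    have hexp : HasDerivAt (fun t => Real.exp (c * t ^ 2 / 2))
        (Real.exp (c * t ^ 2 / 2) * (c * t)) t :=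
      (((hasDerivAt_pow 2 t).const_mul c).div_const 2).exp.congr_deriv (by simp; ring)
    have hW := (hpow.mul (((hu.hasDerivAt t ht).mul (hv.hasDerivAt_deriv t ht)).sub
      ((hv.hasDerivAt t ht).mul (hu.hasDerivAt_deriv t ht)))).mul hexp
    refine hW.congr_deriv ?_
    simp only [Pi.mul_apply, Pi.sub_apply]
    linear_combination (m * (u t * v' t - v t * u' t) * Real.exp (c * t ^ 2 / 2)) *
      Real.rpow_sub_one ht.1.ne' m
  have hVc : ContinuousOn V (Icc 0 θ) :=
    ((Real.continuous_rpow_const hm).continuousOn.mul ((hu.continuousOn.mul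
      hv.continuousOn_deriv).sub (hv.continuousOn.mul hu.continuousOn_deriv))).mul
      (by fun_prop)
  intro t ht
  have hVt := eq_of_hasDerivAt_eq_zero hVc hV t ⟨ht.1.le, ht.2⟩
  simp only [V, h0, h0', sub_self, mul_zero, zero_mul, mul_eq_zero,
    Real.exp_ne_zero, or_false] at hVt
  exact hVt.resolve_left (Real.rpow_pos_of_pos ht.1 m).ne'

lemma eqOn (hu : IsRadialSolution m c α θ u u') (hv : IsRadialSolution m c α θ v v')
    (hm : 0 ≤ m) (hv0 : ∀ t ∈ Icc 0 θ, v t ≠ 0) (h0 : u 0 = v 0) (h0' : u' 0 = v' 0) :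
    EqOn u v (Icc 0 θ) ∧ EqOn u' v' (Ioc 0 θ) := by
  have hW := hu.wronskian_eq_zero hv hm h0 h0'
  have hquot : ∀ t ∈ Ioo 0 θ, HasDerivAt (fun t => u t / v t) 0 t := fun t ht =>
    ((hu.hasDerivAt t ht).div (hv.hasDerivAt t ht) (hv0 t (Ioo_subset_Icc_self ht))).congr_deriv
      (by rw [div_eq_zero_iff]; left; linear_combination -hW t (Ioo_subset_Ioc_self ht))
  have huv : EqOn u v (Icc 0 θ) := fun t ht => by
    have := eq_of_hasDerivAt_eq_zero (V := fun t => u t / v t)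
      (hu.continuousOn.div hv.continuousOn hv0) hquot t ht
    rwa [h0, div_self (hv0 0 ⟨le_rfl, ht.1.trans ht.2⟩), div_eq_one_iff_eq (hv0 t ht)] at this
  refine ⟨huv, fun t ht => ?_⟩
  have h := hW t ht
  rw [huv (Ioc_subset_Icc_self ht), ← mul_sub] at h
  exact (sub_eq_zero.1 ((mul_eq_zero.1 h).resolve_left (hv0 t (Ioc_subset_Icc_self ht)))).symm

end IsRadialSolution

noncomputable def radialKummer (α n κ η : ℝ) : ℝ := kummerM (α / 2) (n / 2) (-κ * η ^ 2 / 4)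

noncomputable def radialKummerDeriv (α n κ η : ℝ) : ℝ :=
  -(α * κ * η / (2 * n)) * kummerM (α / 2 + 1) (n / 2 + 1) (-κ * η ^ 2 / 4)

section RadialKummer

variable {α n κ : ℝ}

lemma hasDerivAt_neg_mul_sq_div_four (κ η : ℝ) :
    HasDerivAt (fun η => -κ * η ^ 2 / 4) (-(κ * η / 2)) η :=
  (((hasDerivAt_pow 2 η).const_mul (-κ)).div_const 4).congr_deriv (by simp; ring)

lemma hasDerivAt_radialKummer (hn : 0 < n) (η : ℝ) :
    HasDerivAt (radialKummer α n κ) (radialKummerDeriv α n κ η) η :=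
  ((hasDerivAt_kummerM (a := α / 2) (by positivity) _).comp η
    (hasDerivAt_neg_mul_sq_div_four κ η)).congr_deriv (by rw [radialKummerDeriv]; field_simp)

/-- The radial form of Kummer's equation. -/
lemma hasDerivAt_radialKummerDeriv (hn : 0 < n) {η : ℝ} (hη : η ≠ 0) :
    HasDerivAt (radialKummerDeriv α n κ) (-((n - 1) / η) * radialKummerDeriv α n κ η
      - κ / 2 * (α * radialKummer α n κ η + η * radialKummerDeriv α n κ η)) η := by
  have hM := (hasDerivAt_kummerM (a := α / 2 + 1) (b := n / 2 + 1) (by positivity) _).comp η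
    (hasDerivAt_neg_mul_sq_div_four κ η)
  rw [add_assoc (α / 2), add_assoc (n / 2), one_add_one_eq_two] at hM
  have hlin : HasDerivAt (fun η => -(α * κ * η / (2 * n))) (-(α * κ / (2 * n))) η :=
    ((hasDerivAt_id η).const_mul (α * κ) |>.div_const (2 * n) |>.neg).congr_deriv (by simp)
  have hode := kummerM_ode (a := α / 2) (b := n / 2) (by positivity) (-κ * η ^ 2 / 4)
  refine (hlin.mul hM).congr_deriv ?_
  rw [radialKummerDeriv, radialKummer, Function.comp_apply]
  generalize kummerM (α / 2) (n / 2) (-κ * η ^ 2 / 4) = M₀ at hode ⊢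
  generalize kummerM (α / 2 + 1) (n / 2 + 1) (-κ * η ^ 2 / 4) = M₁ at hode ⊢
  generalize kummerM (α / 2 + 2) (n / 2 + 2) (-κ * η ^ 2 / 4) = M₂ at hode ⊢
  field_simp at hode ⊢
  linear_combination (-κ / 2) * hode

lemma isRadialSolution_radialKummer (hn : 0 < n) (θ : ℝ) :
    IsRadialSolution (n - 1) (κ / 2) α θ (radialKummer α n κ) (radialKummerDeriv α n κ) where
  continuousOn := HasDerivAt.continuousOn fun η _ => hasDerivAt_radialKummer hn η
  continuousOn_deriv := by
    refine continuousOn_of_forall_continuousAt fun η _ => ?_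
    unfold radialKummerDeriv
    have := (hasDerivAt_kummerM (a := α / 2 + 1) (b := n / 2 + 1) (by positivity)
      _).continuousAt.comp (hasDerivAt_neg_mul_sq_div_four κ η).continuousAt
    fun_prop
  hasDerivAt η _ := hasDerivAt_radialKummer hn η
  hasDerivAt_deriv η hη := hasDerivAt_radialKummerDeriv hn hη.1.ne'

@[simp]
lemma radialKummer_zero : radialKummer α n κ 0 = 1 := by simp [radialKummer]

@[simp]
lemma radialKummerDeriv_zero : radialKummerDeriv α n κ 0 = 0 := by simp [radialKummerDeriv]

lemma radialKummer_pos (hn : 0 < n) (hαn : α ≤ n) (hκ : 0 ≤ κ) (η : ℝ) :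
    0 < radialKummer α n κ η :=
  kummerM_pos_of_nonpos (by positivity) (by linarith) (by nlinarith [sq_nonneg η])

lemma mul_radialKummer_add_mul_radialKummerDeriv_pos (hα : 0 < α) (hαn : α + 2 ≤ n)
    (hκ : 0 ≤ κ) (η : ℝ) :
    0 < α * radialKummer α n κ η + η * radialKummerDeriv α n κ η := by
  have hn : 0 < n := by linarith
  have hcontig := kummerM_add_one_left (a := α / 2) (b := n / 2) (by positivity) (-κ * η ^ 2 / 4)
  have hpos := kummerM_pos_of_nonpos (c := α / 2 + 1) (b := n / 2) (by positivity) (by linarith)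
    (z := -κ * η ^ 2 / 4) (by nlinarith [sq_nonneg η])
  have : α * radialKummer α n κ η + η * radialKummerDeriv α n κ η =
      α * kummerM (α / 2 + 1) (n / 2) (-κ * η ^ 2 / 4) := by
    rw [radialKummer, radialKummerDeriv, hcontig]
    field_simp
    ring
  rw [this]
  positivity

end RadialKummer

lemma IsBarenblattProfile.isRadialSolution {N : ℕ} {γ α θ : ℝ} {f f' f'' : ℝ → ℝ}
    (hf : IsBarenblattProfile N γ α f f' f'')
    (hpos : ∀ t ∈ Ioo 0 θ, 0 < α * f t + t * f' t) :
    IsRadialSolution (N - 1) ((1 - γ) / 2) α θ f f' where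
  continuousOn t ht := (hf.1 t ht.1).continuousWithinAt.mono Icc_subset_Ici_self
  continuousOn_deriv := hf.2.1.mono Icc_subset_Ici_self
  hasDerivAt t ht := (hf.1 t ht.1.le).hasDerivAt (Ici_mem_nhds ht.1)
  hasDerivAt_deriv t ht := by
    refine ((hf.2.2.1 t ht.1).hasDerivAt (Ioi_mem_nhds ht.1)).congr_deriv ?_
    have hode := hf.2.2.2.2.2 t ht.1
    rw [abs_of_pos (hpos t ht)] at hode
    linear_combination hode

theorem barenblatt_profile_small_alpha_general (N : ℕ) (γ α : ℝ)
    (hγ₂ : γ < 1) (hα : 0 < α) (hα2 : α ≤ (N : ℝ) - 2)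
    (f f' f'' : ℝ → ℝ) (hf : IsBarenblattProfile N γ α f f' f'') :
    (∀ η : ℝ, 0 ≤ η → f η = kummerM (α/2) ((N : ℝ)/2) (-(1 - γ) * η ^ 2 / 4)) ∧
    (∀ η : ℝ, 0 < η → 0 < α * f η + η * f' η) ∧
    (∀ η : ℝ, 0 ≤ η → 0 < f η) := by
  have ⟨hf_deriv, hf'_cont, _, hf0, hf'0, _⟩ := hf
  have hN : (0 : ℝ) < N := by linarith
  have hκ : 0 ≤ 1 - γ := by linarith
  have hF_pos := radialKummer_pos hN (by linarith) hκ (α := α)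
  have hagree : ∀ θ > 0, (∀ t ∈ Ico 0 θ, 0 < α * f t + t * f' t) →
      EqOn f (radialKummer α N (1 - γ)) (Icc 0 θ) ∧
        EqOn f' (radialKummerDeriv α N (1 - γ)) (Ioc 0 θ) := fun θ _ hpos =>
    (hf.isRadialSolution fun t ht => hpos t (Ioo_subset_Ico_self ht)).eqOn
      (isRadialSolution_radialKummer hN θ) (by linarith) (fun t _ => (hF_pos t).ne')
      (by simp [hf0]) (by simp [hf'0])
  have hg_pos : ∀ t ≥ 0, 0 < α * f t + t * f' t := by
    refine forall_pos_of_forall_Ico_pos ?_ (by simpa [hf0]) fun θ hθ hpos => ?_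
    · exact (continuousOn_const.mul fun t ht => (hf_deriv t ht).continuousWithinAt).add
        (continuousOn_id.mul hf'_cont)
    · rw [(hagree θ hθ hpos).1 ⟨hθ.le, le_rfl⟩, (hagree θ hθ hpos).2 ⟨hθ, le_rfl⟩]
      exact mul_radialKummer_add_mul_radialKummerDeriv_pos hα (by linarith) hκ θ
  have hf_eq : ∀ η ≥ 0, f η = radialKummer α N (1 - γ) η := fun η hη =>
    (hagree (η + 1) (by linarith) fun t ht => hg_pos t ht.1).1 ⟨hη, by linarith⟩
  exact ⟨hf_eq, fun η hη => hg_pos η hη.le, fun η hη => hf_eq η hη ▸ hF_pos η⟩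

/-- For `N ≥ 3` and `0 < α ≤ N - 2` the Barenblatt profile is globally given by a
single Kummer function, `α f + η f' > 0` for all `η > 0`, and `f > 0`. -/
theorem barenblatt_profile_small_alpha (N : ℕ) (hN : 3 ≤ N) (γ α : ℝ)
    (hγ₁ : -1 < γ) (hγ₂ : γ < 1) (hα : 0 < α) (hα2 : α ≤ (N : ℝ) - 2)
    (f f' f'' : ℝ → ℝ) (hf : IsBarenblattProfile N γ α f f' f'') :
    (∀ η : ℝ, 0 ≤ η → f η = kummerM (α/2) ((N : ℝ)/2) (-(1 - γ) * η ^ 2 / 4)) ∧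
    (∀ η : ℝ, 0 < η → 0 < α * f η + η * f' η) ∧
    (∀ η : ℝ, 0 ≤ η → 0 < f η) :=
  barenblatt_profile_small_alpha_general N γ α hγ₂ hα hα2 f f' f'' hf
end

section
/- Let J ⊆ (0,∞) be an interval and let h : (0,∞) × J → ℝ be continuous, such that for each α ∈ J the function f_α = h(·, α) is (the restriction to (0,∞) of) a Barenblatt profile with exponent α. Let r : J → (0,∞) be continuous with α·f_α(r(α)) + r(α)·f_α'(r(α)) = 0 for every α ∈ J. Then the function α ↦ f_α(r(α)) never vanishes on J; in particular it has constant sign on J (the paper's Lemma: the values of the profile at the roots η_m(α) of α f + η f' = 0 do not change sign as α varies). -/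
/-!
At a root `R > 0` of `α f + η f' = 0`, a zero of `f` is a double zero. Written as a first-order
system for `(f, f')`, the profile equation has a right-hand side that vanishes at `0` and is
Lipschitz uniformly for `η` in any `[ε, R] ⊆ (0, ∞)`, so backward uniqueness forces `f ≡ 0` on
`(0, R]`, contradicting `f 0 = 1`. Hence `α ↦ f_α (r α)`, continuous through `h`, has no zero on
the interval `J`, and the intermediate value theorem gives it a constant sign.
-/

open Set Filter Topology NNReal

theorem IsPreconnected.mul_pos_of_ne_zero {X : Type*} [TopologicalSpace X] {s : Set X}
    (hs : IsPreconnected s) {φ : X → ℝ} (hφ : ContinuousOn φ s) (hne : ∀ x ∈ s, φ x ≠ 0)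
    {a b : X} (ha : a ∈ s) (hb : b ∈ s) : 0 < φ a * φ b := by
  by_contra! hab
  obtain ⟨x, hx, hx0⟩ : ∃ x ∈ s, φ x = (fun _ => (0 : ℝ)) x := by
    rcases mul_nonpos_iff.mp hab with ⟨ha0, hb0⟩ | ⟨ha0, hb0⟩
    · exact hs.intermediate_value₂ hb ha hφ continuousOn_const hb0 ha0
    · exact hs.intermediate_value₂ ha hb hφ continuousOn_const ha0 hb0
  exact hne x hx hx0

theorem eqOn_zero_of_second_order_ODE {G : ℝ → ℝ × ℝ → ℝ} {K : ℝ≥0} {y y' y'' : ℝ → ℝ}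
    {a b : ℝ} (hG : ∀ t ∈ Ioc a b, LipschitzWith K (G t)) (hG0 : ∀ t ∈ Ioc a b, G t 0 = 0)
    (hy : ∀ t ∈ Icc a b, HasDerivAt y (y' t) t) (hy' : ∀ t ∈ Icc a b, HasDerivAt y' (y'' t) t)
    (hode : ∀ t ∈ Ioc a b, y'' t = G t (y t, y' t)) (hb : y b = 0) (hb' : y' b = 0) :
    EqOn y 0 (Icc a b) := by
  let v : ℝ → ℝ × ℝ → ℝ × ℝ := fun t p => (p.2, G t p)
  have hv : ∀ t ∈ Ioc a b, LipschitzOnWith (max 1 K) (v t) univ := fun t ht =>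
    (LipschitzWith.prod_snd.prodMk (hG t ht)).lipschitzOnWith
  have hsol : ∀ t ∈ Ioc a b, HasDerivWithinAt (fun t => (y t, y' t)) (v t (y t, y' t)) (Iic t) t :=
    fun t ht => by
      simpa only [v, hode t ht] using
        ((hy t (Ioc_subset_Icc_self ht)).prodMk (hy' t (Ioc_subset_Icc_self ht))).hasDerivWithinAt
  have hzero : ∀ t ∈ Ioc a b, HasDerivWithinAt (fun _ => (0 : ℝ × ℝ)) (v t 0) (Iic t) t :=
    fun t ht => by
      rw [show v t 0 = 0 from Prod.ext rfl (hG0 t ht)]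
      exact hasDerivWithinAt_const t (Iic t) 0
  have hcont : ContinuousOn (fun t => (y t, y' t)) (Icc a b) := fun t ht =>
    ((hy t ht).continuousAt.prodMk (hy' t ht).continuousAt).continuousWithinAt
  intro t ht
  have := ODE_solution_unique_of_mem_Icc_left hv hcont hsol (fun _ _ => mem_univ _)
    continuousOn_const hzero (fun _ _ => mem_univ _) (by simp [hb, hb']) ht
  exact congrArg Prod.fst this

/-- The profile equation reads `f'' = barenblattRHS N γ α η (f, f')`. -/
noncomputable def barenblattRHS (N : ℕ) (γ α η : ℝ) (p : ℝ × ℝ) : ℝ :=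
  -(((N : ℝ) - 1) / η) * p.2 - 1/2 * (α * p.1 + η * p.2) + γ/2 * |α * p.1 + η * p.2|

section barenblattRHS

variable {N : ℕ} {γ α η : ℝ}

theorem barenblattRHS_zero : barenblattRHS N γ α η 0 = 0 := by
  simp [barenblattRHS]

theorem abs_barenblattRHS_sub_le (hη : 0 < η) (p q : ℝ × ℝ) :
    |barenblattRHS N γ α η p - barenblattRHS N γ α η q| ≤
      (|(N : ℝ) - 1| / η + (1 + |γ|) / 2 * (|α| + η)) * dist p q := by
  set ℓ : ℝ × ℝ → ℝ := fun p => α * p.1 + η * p.2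
  have h₁ : |p.1 - q.1| ≤ dist p q := by rw [← Real.dist_eq, Prod.dist_eq]; exact le_max_left _ _
  have h₂ : |p.2 - q.2| ≤ dist p q := by rw [← Real.dist_eq, Prod.dist_eq]; exact le_max_right _ _
  have hℓ : |ℓ p - ℓ q| ≤ (|α| + η) * dist p q := calc
    |ℓ p - ℓ q| = |α * (p.1 - q.1) + η * (p.2 - q.2)| := by simp only [ℓ]; ring_nf
    _ ≤ |α| * |p.1 - q.1| + η * |p.2 - q.2| :=
      (abs_add_le _ _).trans_eq (by rw [abs_mul, abs_mul, abs_of_pos hη])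
    _ ≤ (|α| + η) * dist p q := by nlinarith [abs_nonneg α]
  have hℓabs : |(|ℓ p| - |ℓ q|)| ≤ |ℓ p - ℓ q| := abs_abs_sub_abs_le_abs_sub _ _
  calc |barenblattRHS N γ α η p - barenblattRHS N γ α η q|
      = |-(((N : ℝ) - 1) / η) * (p.2 - q.2) - 1/2 * (ℓ p - ℓ q) + γ/2 * (|ℓ p| - |ℓ q|)| := by
        simp only [barenblattRHS, ℓ]; ring_nf
    _ ≤ |(N : ℝ) - 1| / η * |p.2 - q.2| + 1/2 * |ℓ p - ℓ q| + |γ|/2 * |(|ℓ p| - |ℓ q|)| := by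
        refine (abs_add_le _ _).trans (add_le_add ((abs_sub _ _).trans ?_) ?_) <;>
          simp [abs_mul, abs_div, abs_of_pos hη]
    _ ≤ _ := by nlinarith [abs_nonneg γ, dist_nonneg (x := p) (y := q),
        div_nonneg (abs_nonneg ((N : ℝ) - 1)) hη.le]

theorem lipschitzWith_barenblattRHS {ε R : ℝ} (hε : 0 < ε) (hη : η ∈ Icc ε R) :
    LipschitzWith (|(N : ℝ) - 1| / ε + (1 + |γ|) / 2 * (|α| + R)).toNNReal
      (barenblattRHS N γ α η) := by
  refine LipschitzWith.of_dist_le' fun p q =>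
    (abs_barenblattRHS_sub_le (hε.trans_le hη.1) p q).trans ?_
  gcongr
  exacts [hη.1, hη.2]

end barenblattRHS

namespace IsBarenblattProfile

variable {N : ℕ} {γ α : ℝ} {f f' f'' : ℝ → ℝ}

theorem hasDerivAt (hf : IsBarenblattProfile N γ α f f' f'') {η : ℝ} (hη : 0 < η) :
    HasDerivAt f (f' η) η :=
  (hf.1 η hη.le).hasDerivAt (Ici_mem_nhds hη)

theorem hasDerivAt_deriv (hf : IsBarenblattProfile N γ α f f' f'') {η : ℝ} (hη : 0 < η) :
    HasDerivAt f' (f'' η) η :=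
  (hf.2.2.1 η hη).hasDerivAt (Ioi_mem_nhds hη)

theorem second_deriv_eq (hf : IsBarenblattProfile N γ α f f' f'') {η : ℝ} (hη : 0 < η) :
    f'' η = barenblattRHS N γ α η (f η, f' η) := by
  have := hf.2.2.2.2.2 η hη
  simp only [barenblattRHS]
  linarith

theorem tendsto_nhdsGT_zero (hf : IsBarenblattProfile N γ α f f' f'') :
    Tendsto f (𝓝[>] 0) (𝓝 1) :=
  hf.2.2.2.1 ▸ ((hf.1 0 self_mem_Ici).continuousWithinAt.tendsto.mono_left
    (nhdsWithin_mono 0 Ioi_subset_Ici_self))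

theorem eqOn_zero_of_eq_zero_of_deriv_eq_zero (hf : IsBarenblattProfile N γ α f f' f'') {R : ℝ}
    (hfR : f R = 0) (hf'R : f' R = 0) : EqOn f 0 (Ioc 0 R) := by
  intro ε hε
  have hpos : ∀ t ∈ Icc ε R, 0 < t := fun t ht => hε.1.trans_le ht.1
  exact eqOn_zero_of_second_order_ODE
    (fun t ht => lipschitzWith_barenblattRHS hε.1 (Ioc_subset_Icc_self ht))
    (fun _ _ => barenblattRHS_zero) (fun t ht => hf.hasDerivAt (hpos t ht))
    (fun t ht => hf.hasDerivAt_deriv (hpos t ht))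
    (fun t ht => hf.second_deriv_eq (hpos t (Ioc_subset_Icc_self ht))) hfR hf'R
    (left_mem_Icc.mpr hε.2)

theorem apply_ne_zero_of_root (hf : IsBarenblattProfile N γ α f f' f'') {R : ℝ} (hR : 0 < R)
    (hroot : α * f R + R * f' R = 0) : f R ≠ 0 := by
  intro hfR
  have hf'R : f' R = 0 := by
    rw [hfR, mul_zero, zero_add] at hroot
    exact (mul_eq_zero.mp hroot).resolve_left hR.ne'
  have hvanish : f =ᶠ[𝓝[>] 0] 0 := eventually_of_mem (Ioo_mem_nhdsGT hR) fun _ hx =>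
    hf.eqOn_zero_of_eq_zero_of_deriv_eq_zero hfR hf'R (Ioo_subset_Ioc_self hx)
  exact one_ne_zero <| tendsto_nhds_unique hf.tendsto_nhdsGT_zero
    (tendsto_const_nhds.congr' hvanish.symm)

end IsBarenblattProfile

theorem barenblatt_value_at_root_constant_sign_general (N : ℕ) (γ : ℝ)
    (J : Set ℝ) (hJ : J.OrdConnected)
    (h : ℝ × ℝ → ℝ) (hcont : ContinuousOn h (Set.Ioi 0 ×ˢ J))
    (F F' F'' : ℝ → ℝ → ℝ)
    (hprof : ∀ α ∈ J, IsBarenblattProfile N γ α (F α) (F' α) (F'' α))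
    (hrep : ∀ α ∈ J, ∀ η : ℝ, 0 < η → h (η, α) = F α η)
    (r : ℝ → ℝ) (hr : ContinuousOn r J)
    (hrpos : ∀ α ∈ J, 0 < r α)
    (hroot : ∀ α ∈ J, α * F α (r α) + r α * F' α (r α) = 0) :
    (∀ α ∈ J, F α (r α) ≠ 0) ∧
    (∀ α ∈ J, ∀ β ∈ J, 0 < F α (r α) * F β (r β)) := by
  have hne : ∀ α ∈ J, F α (r α) ≠ 0 := fun α hα =>
    (hprof α hα).apply_ne_zero_of_root (hrpos α hα) (hroot α hα)
  have hval : ∀ α ∈ J, h (r α, α) = F α (r α) := fun α hα => hrep α hα (r α) (hrpos α hα)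
  have hcont_val : ContinuousOn (fun α => h (r α, α)) J :=
    hcont.comp (hr.prodMk continuousOn_id) fun α hα => ⟨hrpos α hα, hα⟩
  refine ⟨hne, fun α hα β hβ => ?_⟩
  rw [← hval α hα, ← hval β hβ]
  exact hJ.isPreconnected.mul_pos_of_ne_zero hcont_val
    (fun α hα => hval α hα ▸ hne α hα) hα hβ

/-- The value of the Barenblatt profile at a continuously varying root `r(α)` of
`α f + η f' = 0` never vanishes as `α` ranges over an interval `J ⊆ (0,∞)`;
in particular it has constant sign on `J`. -/
theorem barenblatt_value_at_root_constant_sign (N : ℕ) (hN : 1 ≤ N) (γ : ℝ)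
    (hγ₁ : -1 < γ) (hγ₂ : γ < 1)
    (J : Set ℝ) (hJ : J.OrdConnected) (hJpos : J ⊆ Set.Ioi 0)
    (h : ℝ × ℝ → ℝ) (hcont : ContinuousOn h (Set.Ioi 0 ×ˢ J))
    (F F' F'' : ℝ → ℝ → ℝ)
    (hprof : ∀ α ∈ J, IsBarenblattProfile N γ α (F α) (F' α) (F'' α))
    (hrep : ∀ α ∈ J, ∀ η : ℝ, 0 < η → h (η, α) = F α η)
    (r : ℝ → ℝ) (hr : ContinuousOn r J)
    (hrpos : ∀ α ∈ J, 0 < r α)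
    (hroot : ∀ α ∈ J, α * F α (r α) + r α * F' α (r α) = 0) :
    (∀ α ∈ J, F α (r α) ≠ 0) ∧
    (∀ α ∈ J, ∀ β ∈ J, 0 < F α (r α) * F β (r β)) :=
  barenblatt_value_at_root_constant_sign_general N γ J hJ h hcont F F' F'' hprof hrep r hr hrpos
    hroot
end

section
/- Let N ≥ 1 be an integer, κ > 0, α > N − 2 with α > 0, and 0 < a < b. Let f be twice differentiable on an open interval containing [a,b] and satisfy f''(η) + ((N−1)/η)·f'(η) = −κ·(α·f(η) + η·f'(η)) for all η ∈ (a,b). Set F(η) = α·f(η) + η·f'(η), and assume F(a) = 0, F(b) = 0, and f(a)·F(η) < 0 for every η ∈ (a,b). Then f changes sign exactly once in (a,b): there is exactly one η* ∈ (a,b) with f(η*) = 0, and moreover f(a)·f(b) < 0. -/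
/-!
Write `F = α f + η f'`. Since `(η ^ α f)' = η ^ (α - 1) F`, the weighted profile `η ^ α f` is
strictly monotone on `[a, b]`, so `f` has at most one zero there, and exactly one as soon as
`f a` and `f b` have opposite signs. If they did not, `f` would keep the sign of `f a` on
`(a, b)`, hence so would `-f' = (α f - F) / η`. But the ODE gives
`(exp (κ η² / 2) F)' = exp (κ η² / 2) (α + 2 - N) f'`, so `exp (κ η² / 2) F` would be strictly
monotone on `[a, b]`, contradicting `F a = F b = 0`.
-/

open Set Real

lemma strictAntiOn_Icc_of_hasDerivAt_neg {a b : ℝ} {g g' : ℝ → ℝ}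
    (hcont : ContinuousOn g (Icc a b)) (hg : ∀ x ∈ Ioo a b, HasDerivAt g (g' x) x)
    (hneg : ∀ x ∈ Ioo a b, g' x < 0) : StrictAntiOn g (Icc a b) :=
  strictAntiOn_of_hasDerivWithinAt_neg (convex_Icc a b) hcont
    (by simpa only [interior_Icc] using fun x hx ↦ (hg x hx).hasDerivWithinAt)
    (by rwa [interior_Icc])

lemma existsUnique_zero_of_strictAntiOn_mul {a b : ℝ} {w f : ℝ → ℝ} (hab : a ≤ b)
    (hw : ∀ x ∈ Icc a b, 0 < w x) (hanti : StrictAntiOn (fun x ↦ w x * f x) (Icc a b))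
    (hcont : ContinuousOn (fun x ↦ w x * f x) (Icc a b)) (hfa : 0 < f a) (hfb : f b < 0) :
    ∃ η₀ ∈ Ioo a b, f η₀ = 0 ∧ ∀ η ∈ Ioo a b, f η = 0 → η = η₀ := by
  have hzero : ∀ x ∈ Icc a b, w x * f x = 0 ↔ f x = 0 := fun x hx ↦
    mul_eq_zero_iff_left (hw x hx).ne'
  obtain ⟨η₀, hη₀, hwf⟩ := intermediate_value_Ioo' hab hcont
    ⟨mul_neg_of_pos_of_neg (hw b (right_mem_Icc.2 hab)) hfb,
      mul_pos (hw a (left_mem_Icc.2 hab)) hfa⟩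
  refine ⟨η₀, hη₀, (hzero η₀ (Ioo_subset_Icc_self hη₀)).1 hwf, fun η hη hfη ↦ ?_⟩
  refine hanti.injOn (Ioo_subset_Icc_self hη) (Ioo_subset_Icc_self hη₀) ?_
  simp only [hwf, (hzero η (Ioo_subset_Icc_self hη)).2 hfη]

section RadialProfile

variable {N κ α η : ℝ} {f f' f'' : ℝ → ℝ}

lemma hasDerivAt_rpow_mul (hη : 0 < η) (hf : HasDerivAt f (f' η) η) :
    HasDerivAt (fun x ↦ x ^ α * f x) (η ^ (α - 1) * (α * f η + η * f' η)) η := by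
  refine ((hasDerivAt_rpow_const (p := α) (Or.inl hη.ne')).mul hf).congr_deriv ?_
  rw [show η ^ α = η ^ (α - 1) * η by rw [← rpow_add_one hη.ne', sub_add_cancel]]
  ring

lemma hasDerivAt_exp_mul_flux (hη : η ≠ 0) (hf : HasDerivAt f (f' η) η)
    (hf' : HasDerivAt f' (f'' η) η)
    (hode : f'' η + ((N - 1) / η) * f' η = -κ * (α * f η + η * f' η)) :
    HasDerivAt (fun x ↦ exp (κ * x ^ 2 / 2) * (α * f x + x * f' x))
      (exp (κ * η ^ 2 / 2) * ((α + 2 - N) * f' η)) η := by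
  have hexp : HasDerivAt (fun x ↦ exp (κ * x ^ 2 / 2)) (exp (κ * η ^ 2 / 2) * (κ * η)) η := by
    refine ((hasDerivAt_pow 2 η).const_mul κ |>.div_const 2).exp.congr_deriv ?_
    ring
  have hflux : HasDerivAt (fun x ↦ α * f x + x * f' x) (α * f' η + (1 * f' η + η * f'' η)) η :=
    (hf.const_mul α).add ((hasDerivAt_id η).mul hf')
  have hode' : η * f'' η = -(N - 1) * f' η - κ * η * (α * f η + η * f' η) := by
    field_simp at hode
    linarith
  refine (hexp.mul hflux).congr_deriv ?_
  rw [one_mul, hode']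
  ring

variable {a b : ℝ}

lemma not_forall_deriv_neg_of_flux_eq_zero (ha : 0 < a) (hab : a < b) (hαN : N - 2 < α)
    (hfc : ContinuousOn f (Icc a b)) (hf'c : ContinuousOn f' (Icc a b))
    (hf : ∀ x ∈ Ioo a b, HasDerivAt f (f' x) x) (hf' : ∀ x ∈ Ioo a b, HasDerivAt f' (f'' x) x)
    (hode : ∀ x ∈ Ioo a b, f'' x + ((N - 1) / x) * f' x = -κ * (α * f x + x * f' x))
    (hFa : α * f a + a * f' a = 0) (hFb : α * f b + b * f' b = 0) :
    ¬ ∀ x ∈ Ioo a b, f' x < 0 := by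
  intro hf'neg
  have hanti : StrictAntiOn (fun x ↦ exp (κ * x ^ 2 / 2) * (α * f x + x * f' x)) (Icc a b) :=
    strictAntiOn_Icc_of_hasDerivAt_neg (by fun_prop)
      (fun x hx ↦ hasDerivAt_exp_mul_flux (ha.trans hx.1).ne' (hf x hx) (hf' x hx) (hode x hx))
      (fun x hx ↦ mul_neg_of_pos_of_neg (exp_pos _)
        (mul_neg_of_pos_of_neg (by linarith) (hf'neg x hx)))
  have := hanti (left_mem_Icc.2 hab.le) (right_mem_Icc.2 hab.le) hab
  simp only [hFa, hFb, mul_zero, lt_irrefl] at this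

lemma sign_change_once_of_pos_of_flux_neg (ha : 0 < a) (hab : a < b) (hαN : N - 2 < α)
    (hα : 0 ≤ α) (hfc : ContinuousOn f (Icc a b)) (hf'c : ContinuousOn f' (Icc a b))
    (hf : ∀ x ∈ Ioo a b, HasDerivAt f (f' x) x) (hf' : ∀ x ∈ Ioo a b, HasDerivAt f' (f'' x) x)
    (hode : ∀ x ∈ Ioo a b, f'' x + ((N - 1) / x) * f' x = -κ * (α * f x + x * f' x))
    (hFa : α * f a + a * f' a = 0) (hFb : α * f b + b * f' b = 0) (hfa : 0 < f a)
    (hF : ∀ x ∈ Ioo a b, α * f x + x * f' x < 0) :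
    (∃ η₀ ∈ Ioo a b, f η₀ = 0 ∧ ∀ η ∈ Ioo a b, f η = 0 → η = η₀) ∧ f b < 0 := by
  have hw : ∀ x ∈ Icc a b, 0 < x ^ α := fun x hx ↦ rpow_pos_of_pos (ha.trans_le hx.1) α
  have hcont : ContinuousOn (fun x ↦ x ^ α * f x) (Icc a b) :=
    (continuousOn_id.rpow_const fun x hx ↦ Or.inl (ha.trans_le hx.1).ne').mul hfc
  have hanti : StrictAntiOn (fun x ↦ x ^ α * f x) (Icc a b) :=
    strictAntiOn_Icc_of_hasDerivAt_neg hcont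
      (fun x hx ↦ hasDerivAt_rpow_mul (ha.trans hx.1) (hf x hx))
      (fun x hx ↦ mul_neg_of_pos_of_neg (rpow_pos_of_pos (ha.trans hx.1) _) (hF x hx))
  have hfb : f b < 0 := by
    by_contra! hfb
    have hfpos : ∀ x ∈ Ioo a b, 0 < f x := fun x hx ↦ pos_of_mul_pos_right
      ((mul_nonneg (hw b (right_mem_Icc.2 hab.le)).le hfb).trans_lt
        (hanti (Ioo_subset_Icc_self hx) (right_mem_Icc.2 hab.le) hx.2))
      (hw x (Ioo_subset_Icc_self hx)).le
    refine not_forall_deriv_neg_of_flux_eq_zero ha hab hαN hfc hf'c hf hf' hode hFa hFb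
      fun x hx ↦ ?_
    nlinarith [hF x hx, hfpos x hx, ha.trans hx.1]
  exact ⟨existsUnique_zero_of_strictAntiOn_mul hab.le hw hanti hcont hfa hfb, hfb⟩

end RadialProfile

theorem sign_change_once_between_roots_general (N : ℕ) (κ α : ℝ)
    (hαN : (N : ℝ) - 2 < α) (hα : 0 < α)
    (a b c d : ℝ) (ha : 0 < a) (hab : a < b) (hca : c < a) (hbd : b < d)
    (f f' f'' : ℝ → ℝ)
    (hf : ∀ η ∈ Set.Ioo c d, HasDerivAt f (f' η) η ∧ HasDerivAt f' (f'' η) η)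
    (hode : ∀ η ∈ Set.Ioo a b,
      f'' η + (((N : ℝ) - 1) / η) * f' η = -κ * (α * f η + η * f' η))
    (hFa : α * f a + a * f' a = 0)
    (hFb : α * f b + b * f' b = 0)
    (hsign : ∀ η ∈ Set.Ioo a b, f a * (α * f η + η * f' η) < 0) :
    (∃ η₀ ∈ Set.Ioo a b, f η₀ = 0 ∧ ∀ η ∈ Set.Ioo a b, f η = 0 → η = η₀) ∧
    f a * f b < 0 := by
  have hfa : f a ≠ 0 := fun h ↦ by
    simpa [h] using hsign ((a + b) / 2) ⟨by linarith, by linarith⟩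
  have hsub : Icc a b ⊆ Ioo c d := Icc_subset_Ioo hca hbd
  have hfc : ContinuousOn f (Icc a b) := fun x hx ↦
    (hf x (hsub hx)).1.continuousAt.continuousWithinAt
  have hf'c : ContinuousOn f' (Icc a b) := fun x hx ↦
    (hf x (hsub hx)).2.continuousAt.continuousWithinAt
  -- The equation is linear, so `f a • f` is a solution that starts positive.
  obtain ⟨⟨η₀, hη₀, hη₀_zero, huniq⟩, hfb⟩ :=
    sign_change_once_of_pos_of_flux_neg (κ := κ) (f := (f a * f ·)) (f' := (f a * f' ·))
      (f'' := (f a * f'' ·)) ha hab hαN hα.le (continuousOn_const.mul hfc)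
      (continuousOn_const.mul hf'c)
      (fun x hx ↦ (hf x (hsub (Ioo_subset_Icc_self hx))).1.const_mul _)
      (fun x hx ↦ (hf x (hsub (Ioo_subset_Icc_self hx))).2.const_mul _)
      (fun x hx ↦ by linear_combination f a * hode x hx)
      (by linear_combination f a * hFa) (by linear_combination f a * hFb)
      (mul_self_pos.2 hfa) (fun x hx ↦ by linear_combination hsign x hx)
  exact ⟨⟨η₀, hη₀, (mul_eq_zero_iff_left hfa).1 hη₀_zero,
    fun η hη hfη ↦ huniq η hη (by simp only [hfη, mul_zero])⟩, hfb⟩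

/-- Sign-change lemma for a linear piece of the Barenblatt profile equation:
between two consecutive roots `a < b` of `F = α f + η f'`, where `F` keeps a
constant sign opposite to `f(a)`, the solution `f` of the linear ODE
`f'' + ((N-1)/η) f' = -κ F` changes sign exactly once. -/
theorem sign_change_once_between_roots (N : ℕ) (hN : 1 ≤ N) (κ α : ℝ) (hκ : 0 < κ)
    (hαN : (N : ℝ) - 2 < α) (hα : 0 < α)
    (a b c d : ℝ) (ha : 0 < a) (hab : a < b) (hca : c < a) (hbd : b < d)
    (f f' f'' : ℝ → ℝ)
    (hf : ∀ η ∈ Set.Ioo c d, HasDerivAt f (f' η) η ∧ HasDerivAt f' (f'' η) η)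
    (hode : ∀ η ∈ Set.Ioo a b,
      f'' η + (((N : ℝ) - 1) / η) * f' η = -κ * (α * f η + η * f' η))
    (hFa : α * f a + a * f' a = 0)
    (hFb : α * f b + b * f' b = 0)
    (hsign : ∀ η ∈ Set.Ioo a b, f a * (α * f η + η * f' η) < 0) :
    (∃ η₀ ∈ Set.Ioo a b, f η₀ = 0 ∧ ∀ η ∈ Set.Ioo a b, f η = 0 → η = η₀) ∧
    f a * f b < 0 :=
  sign_change_once_between_roots_general N κ α hαN hα a b c d ha hab hca hbd f f' f'' hf hode hFa
    hFb hsign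
end
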